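/- For all x > 0, h(x) = N(x/2) + (1/(3√(2π)·x))·e^{-x²/8} satisfies h(x) ≥ N(1/√5) + (1/12)·√(10/π)·e^{-1/10}. -/

import Mathlib

open Real MeasureTheory

/-- The standard normal cumulative distribution function. -/
noncomputable def stdNormalCDF (x : ℝ) : ℝ :=
  (Real.sqrt (2 * Real.pi))⁻¹ * ∫ v in Set.Iic x, Real.exp (-v ^ 2 / 2)

noncomputable def hAux (x : ℝ) : ℝ :=
  stdNormalCDF (x / 2) + 1 / (3 * Real.sqrt (2 * Real.pi) * x) * Real.exp (-x ^ 2 / 8)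

lemma gauss_integrable : MeasureTheory.Integrable (fun v : ℝ => Real.exp (-v ^ 2 / 2)) := by
  have := integrable_exp_neg_mul_sq (b := (1/2 : ℝ)) (by norm_num)
  convert this using 2 with v
  ring_nf

lemma gauss_cont : Continuous (fun v : ℝ => Real.exp (-v ^ 2 / 2)) := by
  continuity

lemma G_hasDeriv (y : ℝ) :
    HasDerivAt (fun t : ℝ => ∫ v in Set.Iic t, Real.exp (-v ^ 2 / 2))
      (Real.exp (-y ^ 2 / 2)) y := by
  have heq : (fun t : ℝ => ∫ v in Set.Iic t, Real.exp (-v ^ 2 / 2)) =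
      (fun t : ℝ => (∫ v in Set.Iic (0:ℝ), Real.exp (-v ^ 2 / 2)) +
        ∫ v in (0:ℝ)..t, Real.exp (-v ^ 2 / 2)) := by
    funext t
    have := intervalIntegral.integral_Iic_sub_Iic (f := fun v : ℝ => Real.exp (-v ^ 2 / 2))
      (μ := volume) (a := (0:ℝ)) (b := t) gauss_integrable.integrableOn
      gauss_integrable.integrableOn
    linarith [this]
  rw [heq]
  have h1 : HasDerivAt (fun t : ℝ => ∫ v in (0:ℝ)..t, Real.exp (-v ^ 2 / 2))
      (Real.exp (-y ^ 2 / 2)) y :=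
    intervalIntegral.integral_hasDerivAt_right gauss_integrable.intervalIntegrable
      gauss_cont.aestronglyMeasurable.stronglyMeasurableAtFilter gauss_cont.continuousAt
  simpa using h1.const_add (∫ v in Set.Iic (0:ℝ), Real.exp (-v ^ 2 / 2))

lemma cdf_hasDeriv (y : ℝ) :
    HasDerivAt stdNormalCDF ((Real.sqrt (2 * Real.pi))⁻¹ * Real.exp (-y ^ 2 / 2)) y :=
  (G_hasDeriv y).const_mul _

lemma hAux_hasDeriv {x : ℝ} (hx : 0 < x) :
    HasDerivAt hAux
      ((Real.sqrt (2 * Real.pi))⁻¹ * Real.exp (-x ^ 2 / 8) * (5 / 12 - 1 / (3 * x ^ 2))) x := by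
  have s_pos : 0 < Real.sqrt (2 * Real.pi) := Real.sqrt_pos.2 (by positivity)
  have h1 : HasDerivAt (fun t : ℝ => stdNormalCDF (t / 2))
      ((Real.sqrt (2 * Real.pi))⁻¹ * Real.exp (-x ^ 2 / 8) * (1/2)) x := by
    have h := (cdf_hasDeriv (x / 2)).comp x ((hasDerivAt_id x).div_const 2)
    have e : -(x / 2) ^ 2 / 2 = -x ^ 2 / 8 := by ring
    rw [e] at h
    exact h
  have h2 : HasDerivAt (fun t : ℝ => 1 / (3 * Real.sqrt (2 * Real.pi) * t) * Real.exp (-t ^ 2 / 8))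
      ((Real.sqrt (2 * Real.pi))⁻¹ * Real.exp (-x ^ 2 / 8) * (-(1 / (3 * x ^ 2)) - 1 / 12)) x := by
    have hfun : (fun t : ℝ => 1 / (3 * Real.sqrt (2 * Real.pi) * t)) =
        fun t : ℝ => 1 / (3 * Real.sqrt (2 * Real.pi)) * t⁻¹ := by
      funext t; rw [one_div, mul_inv, one_div]
    have hinv : HasDerivAt (fun t : ℝ => 1 / (3 * Real.sqrt (2 * Real.pi) * t))
        (1 / (3 * Real.sqrt (2 * Real.pi)) * -(x ^ 2)⁻¹) x := by
      rw [hfun]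
      exact ((hasDerivAt_inv hx.ne')).const_mul _
    have hexp : HasDerivAt (fun t : ℝ => Real.exp (-t ^ 2 / 8))
        (Real.exp (-x ^ 2 / 8) * (-x / 4)) x := by
      have hp : HasDerivAt (fun t : ℝ => -t ^ 2 / 8) (-x / 4) x := by
        have := ((hasDerivAt_pow 2 x).neg).div_const 8
        refine this.congr_deriv ?_
        push_cast
        ring
      simpa [mul_comm] using hp.exp
    have := hinv.mul hexp
    refine this.congr_deriv ?_
    field_simp
    ring
  have := h1.add h2
  refine this.congr_deriv ?_
  ring

lemma deriv_hAux {x : ℝ} (hx : 0 < x) :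
    deriv hAux x =
      (Real.sqrt (2 * Real.pi))⁻¹ * Real.exp (-x ^ 2 / 8) * (5 / 12 - 1 / (3 * x ^ 2)) :=
  (hAux_hasDeriv hx).deriv

lemma x0_sq : (2 / Real.sqrt 5 : ℝ) ^ 2 = 4 / 5 := by
  rw [div_pow, Real.sq_sqrt (by norm_num : (0:ℝ) ≤ 5)]
  norm_num

theorem stmt_7 (x : ℝ) (hx : 0 < x) :
    stdNormalCDF (x / 2) + 1 / (3 * Real.sqrt (2 * Real.pi) * x) * Real.exp (-x ^ 2 / 8) ≥
      stdNormalCDF (1 / Real.sqrt 5)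
        + (1 / 12) * Real.sqrt (10 / Real.pi) * Real.exp (-1 / 10) := by
  have h5 : (0:ℝ) < Real.sqrt 5 := Real.sqrt_pos.2 (by norm_num)
  set x₀ : ℝ := 2 / Real.sqrt 5 with hx₀def
  have hx₀ : 0 < x₀ := by positivity
  have sπ : 0 < Real.sqrt Real.pi := Real.sqrt_pos.2 Real.pi_pos
  have s2 : (0:ℝ) < Real.sqrt 2 := Real.sqrt_pos.2 (by norm_num)
  -- value of hAux at x₀ equals the RHS
  have hrhs : hAux x₀ = stdNormalCDF (1 / Real.sqrt 5)
      + (1 / 12) * Real.sqrt (10 / Real.pi) * Real.exp (-1 / 10) := by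
    have e1 : x₀ / 2 = 1 / Real.sqrt 5 := by
      rw [hx₀def]; field_simp
    have e2 : -x₀ ^ 2 / 8 = -1 / 10 := by
      rw [x0_sq]; norm_num
    have e3 : 1 / (3 * Real.sqrt (2 * Real.pi) * x₀) = (1 / 12) * Real.sqrt (10 / Real.pi) := by
      rw [Real.sqrt_mul (by norm_num : (0:ℝ) ≤ 2),
        Real.sqrt_div (by norm_num : (0:ℝ) ≤ 10),
        show (10:ℝ) = 2 * 5 by norm_num,
        Real.sqrt_mul (by norm_num : (0:ℝ) ≤ 2)]
      have m2 : Real.sqrt 2 * Real.sqrt 2 = 2 := Real.mul_self_sqrt (by norm_num)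
      have m5 : Real.sqrt 5 * Real.sqrt 5 = 5 := Real.mul_self_sqrt (by norm_num)
      rw [hx₀def]
      field_simp
      linear_combination (-6) * m2
    rw [hAux, e1, e2, e3]
  have key : hAux x₀ ≤ hAux x := by
    rcases le_total x₀ x with hc | hc
    · have mono : MonotoneOn hAux (Set.Ici x₀) := by
        apply monotoneOn_of_deriv_nonneg (convex_Ici x₀)
        · intro y hy
          exact ((hAux_hasDeriv (lt_of_lt_of_le hx₀ hy)).continuousAt).continuousWithinAt
        · intro y hy
          rw [interior_Ici] at hy
          exact ((hAux_hasDeriv (hx₀.trans hy)).differentiableAt).differentiableWithinAt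
        · intro y hy
          rw [interior_Ici] at hy
          have hy0 : 0 < y := hx₀.trans hy
          rw [deriv_hAux hy0]
          have hy2 : (4:ℝ)/5 ≤ y ^ 2 := by
            rw [← x0_sq]; exact pow_le_pow_left₀ hx₀.le (le_of_lt hy) 2
          have hfac : (0:ℝ) ≤ 5 / 12 - 1 / (3 * y ^ 2) := by
            have h1 : (1:ℝ) / (3 * y ^ 2) ≤ 5 / 12 := by
              rw [div_le_iff₀ (by positivity)]
              nlinarith
            linarith
          have : (0:ℝ) ≤ (Real.sqrt (2 * Real.pi))⁻¹ * Real.exp (-y ^ 2 / 8) := by positivity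
          exact mul_nonneg this hfac
      exact mono Set.self_mem_Ici (Set.mem_Ici.2 hc) hc
    · have anti : AntitoneOn hAux (Set.Icc x x₀) := by
        apply antitoneOn_of_deriv_nonpos (convex_Icc x x₀)
        · intro y hy
          exact ((hAux_hasDeriv (lt_of_lt_of_le hx hy.1)).continuousAt).continuousWithinAt
        · intro y hy
          rw [interior_Icc] at hy
          exact ((hAux_hasDeriv (hx.trans hy.1)).differentiableAt).differentiableWithinAt
        · intro y hy
          rw [interior_Icc] at hy
          have hy0 : 0 < y := hx.trans hy.1
          rw [deriv_hAux hy0]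
          have hy2 : y ^ 2 ≤ (4:ℝ)/5 := by
            rw [← x0_sq]; exact pow_le_pow_left₀ hy0.le hy.2.le 2
          have hfac : 5 / 12 - 1 / (3 * y ^ 2) ≤ (0:ℝ) := by
            have h1 : (5:ℝ) / 12 ≤ 1 / (3 * y ^ 2) := by
              rw [le_div_iff₀ (by positivity)]
              nlinarith
            linarith
          have : (0:ℝ) ≤ (Real.sqrt (2 * Real.pi))⁻¹ * Real.exp (-y ^ 2 / 8) := by positivity
          exact mul_nonpos_of_nonneg_of_nonpos this hfac
      exact anti (Set.mem_Icc.2 ⟨le_rfl, hc⟩) (Set.mem_Icc.2 ⟨hc, le_rfl⟩) hc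
  rw [ge_iff_le, ← hrhs]
  exact key
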